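/- Theorem 1 (asymmetric part): suppose the class-dependent noise rates satisfy η_{y k} < 1 - η_y for all y and all k ≠ y. Let f* be a global minimizer of the clean risk over a class F of classifiers with R(f*) = 0, and let f*_η ∈ F be a global minimizer of the asymmetric-noise risk over F. Then for μ-almost every (x, y), f*_η x y = 1 and f*_η x k = 0 for all k ≠ y; in particular f*_η x = f* x for μ-almost every (x, y), so the RCE loss is noise tolerant under asymmetric label noise. -/
import Mathlib


open Finset MeasureTheory

/-- Clipped logarithm: `L t = Real.log t` for `t > 0` and `L 0 = A`. -/
noncomputable def clog (A : ℝ) (t : ℝ) : ℝ := if t = 0 then A else Real.log t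

/-- One-hot vector at label `y`. -/
def onehot {K : ℕ} (y : Fin K) : Fin K → ℝ := fun k => if k = y then 1 else 0

/-- Reverse Cross Entropy loss with clipping constant `A`. -/
noncomputable def rce {K : ℕ} (A : ℝ) (p : Fin K → ℝ) (y : Fin K) : ℝ :=
  -∑ k, p k * clog A (onehot y k)

/-- `p` is a probability vector. -/
def IsProbVec {K : ℕ} (p : Fin K → ℝ) : Prop := (∀ k, 0 ≤ p k) ∧ ∑ k, p k = 1

/-- A classifier: pointwise a probability vector, coordinatewise measurable. -/
def IsClassifier {𝒳 : Type*} [MeasurableSpace 𝒳] {K : ℕ} (f : 𝒳 → Fin K → ℝ) : Prop :=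
  (∀ x, IsProbVec (f x)) ∧ ∀ k : Fin K, Measurable fun xy : 𝒳 × Fin K => f xy.1 k

/-- Clean RCE risk `R(f) = ∫ ℓ_rce(f x, y) dμ(x, y)`. -/
noncomputable def cleanRisk {𝒳 : Type*} [MeasurableSpace 𝒳] {K : ℕ} (A : ℝ)
    (μ : Measure (𝒳 × Fin K)) (f : 𝒳 → Fin K → ℝ) : ℝ :=
  ∫ xy, rce A (f xy.1) xy.2 ∂μ

/-- Total noise rate of class `y`: `η_y = ∑_{k ≠ y} η_{y k}`. -/
def etaRow {K : ℕ} (η : Fin K → Fin K → ℝ) (y : Fin K) : ℝ :=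
  ∑ k ∈ univ \ {y}, η y k

/-- Noisy RCE risk under class-dependent (asymmetric) label noise with rates `η_{y k}`. -/
noncomputable def asymNoisyRisk {𝒳 : Type*} [MeasurableSpace 𝒳] {K : ℕ} (A : ℝ)
    (μ : Measure (𝒳 × Fin K)) (η : Fin K → Fin K → ℝ) (f : 𝒳 → Fin K → ℝ) : ℝ :=
  ∫ xy, ((1 - etaRow η xy.2) * rce A (f xy.1) xy.2
      + ∑ k ∈ univ \ {xy.2}, η xy.2 k * rce A (f xy.1) k) ∂μ

lemma sum_diff_eq {K : ℕ} {p : Fin K → ℝ} (hp : IsProbVec p) (y : Fin K) :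
    ∑ k ∈ univ \ {y}, p k = 1 - p y := by
  rw [Finset.sum_sdiff_eq_sub (Finset.subset_univ _), Finset.sum_singleton, hp.2]

lemma rce_eq {K : ℕ} (A : ℝ) {p : Fin K → ℝ} (hp : IsProbVec p) (y : Fin K) :
    rce A p y = -A * (1 - p y) := by
  have h : ∀ k, clog A (onehot y k) = if k = y then 0 else A := by
    intro k
    by_cases h : k = y <;> simp [clog, onehot, h]
  unfold rce
  rw [show (∑ k, p k * clog A (onehot y k)) = ∑ k, (if k = y then 0 else p k * A) from
    Finset.sum_congr rfl fun k _ => by rw [h]; split_ifs <;> ring]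
  rw [Finset.sum_eq_sum_sdiff_singleton_add (Finset.mem_univ y), if_pos rfl, add_zero]
  have h3 : ∑ k ∈ univ \ {y}, (if k = y then (0:ℝ) else p k * A) = ∑ k ∈ univ \ {y}, p k * A := by
    refine Finset.sum_congr rfl fun k hk => ?_
    rw [if_neg]
    exact fun h => (Finset.mem_sdiff.1 hk).2 (by simp [h])
  rw [h3, ← Finset.sum_mul, sum_diff_eq hp]; ring

lemma key_sum {ι : Type*} (S : Finset ι) (A : ℝ) (p q : ι → ℝ) :
    (1 - ∑ k ∈ S, q k) * (-A * ∑ k ∈ S, p k) + ∑ k ∈ S, q k * (-A * (1 - p k))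
      = -A * (∑ k ∈ S, q k) + -A * ∑ k ∈ S, p k * (1 - (∑ j ∈ S, q j) - q k) := by
  set E := ∑ k ∈ S, q k with hE
  calc (1 - E) * (-A * ∑ k ∈ S, p k) + ∑ k ∈ S, q k * (-A * (1 - p k))
      = ∑ k ∈ S, ((1 - E) * (-A * p k) + q k * (-A * (1 - p k))) := by
        rw [Finset.mul_sum, Finset.mul_sum, Finset.sum_add_distrib]
    _ = ∑ k ∈ S, (-A * q k + -A * (p k * (1 - E - q k))) :=
        Finset.sum_congr rfl fun k _ => by ring
    _ = -A * E + -A * ∑ k ∈ S, p k * (1 - E - q k) := by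
        rw [Finset.sum_add_distrib, ← Finset.mul_sum, ← Finset.mul_sum]
/-- Theorem 1 (asymmetric part): suppose the class-dependent noise rates satisfy
`η_{y k} < 1 - η_y` for all `y` and all `k ≠ y`. Let `f*` be a global minimizer of the
clean risk over a class `F` of classifiers with `R(f*) = 0`, and let `f*_η ∈ F` be a
global minimizer of the asymmetric-noise risk over `F`. Then for `μ`-almost every
`(x, y)`, `f*_η x y = 1` and `f*_η x k = 0` for all `k ≠ y`; in particular
`f*_η x = f* x` for `μ`-almost every `(x, y)`, so the RCE loss is noise tolerant under
asymmetric label noise. -/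
theorem rce_noise_tolerant_asymmetric {𝒳 : Type*} [MeasurableSpace 𝒳] {K : ℕ} (hK : 2 ≤ K)
    (A : ℝ) (hA : A < 0) (μ : Measure (𝒳 × Fin K)) [IsProbabilityMeasure μ]
    (η : Fin K → Fin K → ℝ) (hη0 : ∀ y k, y ≠ k → 0 ≤ η y k)
    (hη1 : ∀ y, etaRow η y ≤ 1)
    (hη : ∀ y k, k ≠ y → η y k < 1 - etaRow η y)
    (F : Set (𝒳 → Fin K → ℝ)) (hF : ∀ f ∈ F, IsClassifier f)
    (fstar : 𝒳 → Fin K → ℝ) (hfstar : fstar ∈ F)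
    (hminClean : ∀ f ∈ F, cleanRisk A μ fstar ≤ cleanRisk A μ f)
    (hzero : cleanRisk A μ fstar = 0)
    (fstarEta : 𝒳 → Fin K → ℝ) (hfstarEta : fstarEta ∈ F)
    (hminNoisy : ∀ f ∈ F, asymNoisyRisk A μ η fstarEta ≤ asymNoisyRisk A μ η f) :
    ∀ᵐ xy ∂μ, (fstarEta xy.1 xy.2 = 1 ∧ ∀ k, k ≠ xy.2 → fstarEta xy.1 k = 0)
      ∧ fstarEta xy.1 = fstar xy.1 := by
  have hApos : (0:ℝ) < -A := by linarith
  have hAne : -A ≠ 0 := ne_of_gt hApos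
  obtain ⟨hpS, hmS⟩ := hF fstar hfstar
  obtain ⟨hpE, hmE⟩ := hF fstarEta hfstarEta
  -- basic probability-vector facts
  have hle1 : ∀ (p : Fin K → ℝ), IsProbVec p → ∀ k, p k ≤ 1 := fun p hp k =>
    hp.2 ▸ Finset.single_le_sum (fun j _ => hp.1 j) (Finset.mem_univ k)
  have hrce_nonneg : ∀ (p : Fin K → ℝ), IsProbVec p → ∀ k, 0 ≤ rce A p k := by
    intro p hp k
    rw [rce_eq A hp]
    have := hle1 p hp k
    nlinarith
  have hrce_le : ∀ (p : Fin K → ℝ), IsProbVec p → ∀ k, rce A p k ≤ -A := by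
    intro p hp k
    rw [rce_eq A hp]
    have := hp.1 k
    nlinarith
  have honehot : ∀ (p : Fin K → ℝ), IsProbVec p → ∀ y, p y = 1 → ∀ k, k ≠ y → p k = 0 := by
    intro p hp y h1 k hk
    have hs := sum_diff_eq hp y
    rw [h1, sub_self] at hs
    exact (Finset.sum_eq_zero_iff_of_nonneg fun j _ => hp.1 j).1 hs k (by simp [hk])
  have hη0' : ∀ (y k : Fin K), k ∈ univ \ {y} → 0 ≤ η y k := by
    intro y k hk
    refine hη0 y k fun h => ?_
    exact absurd (by simp [h]) (Finset.mem_sdiff.1 hk).2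
  have hEnn : ∀ y, 0 ≤ etaRow η y := fun y => Finset.sum_nonneg (hη0' y)
  have hEnonneg : ∀ y, (0:ℝ) ≤ 1 - etaRow η y := fun y => by linarith [hη1 y]
  -- measurability
  have j0 : Fin K := ⟨0, by omega⟩
  have hsec : ∀ (f : 𝒳 → Fin K → ℝ),
      (∀ k : Fin K, Measurable fun xy : 𝒳 × Fin K => f xy.1 k) →
      ∀ k, Measurable fun x : 𝒳 => f x k := by
    intro f hf k
    exact (hf k).comp (measurable_prodMk_right (y := j0))
  have hrce_meas : ∀ (f : 𝒳 → Fin K → ℝ), (∀ k, Measurable fun x : 𝒳 => f x k) →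
      ∀ j, Measurable fun x : 𝒳 => rce A (f x) j := by
    intro f hf j
    unfold rce
    exact (Finset.measurable_sum _ fun k _ => (hf k).mul measurable_const).neg
  have hbdd_int : ∀ (g : 𝒳 × Fin K → ℝ), Measurable g → (∀ xy, 0 ≤ g xy) →
      (∀ xy, g xy ≤ -A) → Integrable g μ := by
    intro g hm h0 h1
    exact (integrable_const (-A)).mono' hm.aestronglyMeasurable
      (ae_of_all _ fun xy => by
        rw [Real.norm_eq_abs, abs_of_nonneg (h0 xy)]; exact h1 xy)
  set gC : 𝒳 × Fin K → ℝ := fun xy => rce A (fstar xy.1) xy.2 with hgC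
  set gE : 𝒳 × Fin K → ℝ := fun xy => (1 - etaRow η xy.2) * rce A (fstarEta xy.1) xy.2
      + ∑ k ∈ univ \ {xy.2}, η xy.2 k * rce A (fstarEta xy.1) k with hgEdef
  set gS : 𝒳 × Fin K → ℝ := fun xy => (1 - etaRow η xy.2) * rce A (fstar xy.1) xy.2
      + ∑ k ∈ univ \ {xy.2}, η xy.2 k * rce A (fstar xy.1) k with hgSdef
  set c : 𝒳 × Fin K → ℝ := fun xy => -A * etaRow η xy.2 with hcdef
  have hmeas_noisy : ∀ (f : 𝒳 → Fin K → ℝ), (∀ k, Measurable fun x : 𝒳 => f x k) →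
      Measurable (fun xy : 𝒳 × Fin K => (1 - etaRow η xy.2) * rce A (f xy.1) xy.2
        + ∑ k ∈ univ \ {xy.2}, η xy.2 k * rce A (f xy.1) k) := by
    intro f hf
    apply measurable_from_prod_countable_left
    intro y
    show Measurable fun x : 𝒳 => (1 - etaRow η y) * rce A (f x) y
        + ∑ k ∈ univ \ {y}, η y k * rce A (f x) k
    exact (measurable_const.mul (hrce_meas f hf y)).add
      (Finset.measurable_sum _ fun k _ => measurable_const.mul (hrce_meas f hf k))
  have hmeasC : Measurable gC :=
    measurable_from_prod_countable_left fun y => hrce_meas fstar (hsec fstar hmS) y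
  have hmeasc : Measurable c := measurable_from_prod_countable_left fun y => (measurable_const : Measurable fun _ : 𝒳 => -A * etaRow η y)
  -- pointwise bounds and integrability
  have hnoisy_bnd : ∀ (f : 𝒳 → Fin K → ℝ) (hp : ∀ x, IsProbVec (f x)) (xy : 𝒳 × Fin K),
      0 ≤ (1 - etaRow η xy.2) * rce A (f xy.1) xy.2
        + ∑ k ∈ univ \ {xy.2}, η xy.2 k * rce A (f xy.1) k ∧
      (1 - etaRow η xy.2) * rce A (f xy.1) xy.2
        + ∑ k ∈ univ \ {xy.2}, η xy.2 k * rce A (f xy.1) k ≤ -A := by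
    intro f hp xy
    constructor
    · exact add_nonneg (mul_nonneg (hEnonneg xy.2) (hrce_nonneg _ (hp xy.1) xy.2))
        (Finset.sum_nonneg fun k hk => mul_nonneg (hη0' _ _ hk) (hrce_nonneg _ (hp xy.1) k))
    · have h1 : (1 - etaRow η xy.2) * rce A (f xy.1) xy.2 ≤ (1 - etaRow η xy.2) * (-A) :=
        mul_le_mul_of_nonneg_left (hrce_le _ (hp xy.1) _) (hEnonneg xy.2)
      have h2 : ∑ k ∈ univ \ {xy.2}, η xy.2 k * rce A (f xy.1) k
          ≤ ∑ k ∈ univ \ {xy.2}, η xy.2 k * (-A) :=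
        Finset.sum_le_sum fun k hk =>
          mul_le_mul_of_nonneg_left (hrce_le _ (hp xy.1) k) (hη0' _ _ hk)
      have h3 : ∑ k ∈ univ \ {xy.2}, η xy.2 k * (-A) = etaRow η xy.2 * (-A) := by
        rw [← Finset.sum_mul]; rfl
      rw [h3] at h2
      calc (1 - etaRow η xy.2) * rce A (f xy.1) xy.2
            + ∑ k ∈ univ \ {xy.2}, η xy.2 k * rce A (f xy.1) k
          ≤ (1 - etaRow η xy.2) * (-A) + etaRow η xy.2 * (-A) := add_le_add h1 h2
        _ = -A := by ring
  have hintE : Integrable gE μ :=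
    hbdd_int _ (hmeas_noisy fstarEta (hsec _ hmE)) (fun xy => (hnoisy_bnd fstarEta hpE xy).1)
      (fun xy => (hnoisy_bnd fstarEta hpE xy).2)
  have hintc : Integrable c μ :=
    hbdd_int _ hmeasc (fun xy => mul_nonneg hApos.le (hEnn xy.2))
      (fun xy => by
        have h1 := hη1 xy.2
        have h2 := hEnn xy.2
        show -A * etaRow η xy.2 ≤ -A
        nlinarith)
  have hintC : Integrable gC μ :=
    hbdd_int _ hmeasC (fun xy => hrce_nonneg _ (hpS xy.1) xy.2)
      (fun xy => hrce_le _ (hpS xy.1) xy.2)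
  -- Step 1: clean minimizer puts all mass on the true label, a.e.
  have hclean0 : ∀ᵐ xy ∂μ, gC xy = 0 := by
    have hzero' : ∫ xy, gC xy ∂μ = 0 := hzero
    have h := (integral_eq_zero_iff_of_nonneg (f := gC)
      (fun xy => hrce_nonneg _ (hpS xy.1) xy.2) hintC).1 hzero'
    exact h.mono fun xy hxy => by simpa using hxy
  have hstar1 : ∀ᵐ xy ∂μ, fstar xy.1 xy.2 = 1 := by
    refine hclean0.mono fun xy h => ?_
    have h' : -A * (1 - fstar xy.1 xy.2) = 0 := by
      rw [← rce_eq A (hpS xy.1)]; exact h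
    rcases mul_eq_zero.1 h' with h'' | h''
    · exact absurd h'' hAne
    · linarith
  -- Step 2: a.e. the noisy integrand of fstar equals c
  have hgSc : ∀ᵐ xy ∂μ, gS xy = c xy := by
    refine hstar1.mono fun xy h1 => ?_
    have hp := hpS xy.1
    have hterm : ∀ k ∈ univ \ {xy.2}, η xy.2 k * rce A (fstar xy.1) k = η xy.2 k * (-A) := by
      intro k hk
      have hk' : k ≠ xy.2 := fun h => (Finset.mem_sdiff.1 hk).2 (by simp [h])
      rw [rce_eq A hp k, honehot _ hp _ h1 k hk']; ring
    show (1 - etaRow η xy.2) * rce A (fstar xy.1) xy.2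
        + ∑ k ∈ univ \ {xy.2}, η xy.2 k * rce A (fstar xy.1) k = -A * etaRow η xy.2
    rw [rce_eq A hp, h1, Finset.sum_congr rfl hterm, ← Finset.sum_mul]
    show (1 - etaRow η xy.2) * (-A * (1 - 1)) + etaRow η xy.2 * (-A) = -A * etaRow η xy.2
    ring
  -- Step 3: decomposition of the noisy integrand of fstarEta
  have hkey : ∀ xy : 𝒳 × Fin K, gE xy
      = c xy + -A * ∑ k ∈ univ \ {xy.2}, fstarEta xy.1 k
          * (1 - etaRow η xy.2 - η xy.2 k) := by
    rintro ⟨x, y⟩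
    have hp := hpE x
    show (1 - etaRow η y) * rce A (fstarEta x) y
        + ∑ k ∈ univ \ {y}, η y k * rce A (fstarEta x) k
      = -A * etaRow η y + -A * ∑ k ∈ univ \ {y}, fstarEta x k * (1 - etaRow η y - η y k)
    have hs1 : ∑ k ∈ univ \ {y}, η y k * rce A (fstarEta x) k
        = ∑ k ∈ univ \ {y}, η y k * (-A * (1 - fstarEta x k)) :=
      Finset.sum_congr rfl fun k _ => by rw [rce_eq A hp k]
    have hs2 : (1:ℝ) - fstarEta x y = ∑ k ∈ univ \ {y}, fstarEta x k :=
      (sum_diff_eq hp y).symm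
    rw [rce_eq A hp y, hs1, hs2]
    unfold etaRow
    exact key_sum (univ \ {y}) A (fun k => fstarEta x k) (fun k => η y k)
  -- Step 4: compare integrals
  have hIneq : ∫ xy, gE xy ∂μ ≤ ∫ xy, c xy ∂μ := by
    have h1 : asymNoisyRisk A μ η fstarEta ≤ asymNoisyRisk A μ η fstar :=
      hminNoisy fstar hfstar
    have h2 : asymNoisyRisk A μ η fstar = ∫ xy, c xy ∂μ := integral_congr_ae hgSc
    have h3 : asymNoisyRisk A μ η fstarEta = ∫ xy, gE xy ∂μ := rfl
    rw [h3] at h1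
    rw [h2] at h1
    exact h1
  have hcoef : ∀ (y k : Fin K), k ∈ univ \ {y} → 0 < 1 - etaRow η y - η y k := by
    intro y k hk
    have hk' : k ≠ y := fun h => (Finset.mem_sdiff.1 hk).2 (by simp [h])
    have := hη y k hk'
    linarith
  have hD0 : ∀ xy : 𝒳 × Fin K, 0 ≤ gE xy - c xy := by
    intro xy
    rw [hkey xy]
    have : 0 ≤ ∑ k ∈ univ \ {xy.2}, fstarEta xy.1 k * (1 - etaRow η xy.2 - η xy.2 k) :=
      Finset.sum_nonneg fun k hk =>
        mul_nonneg ((hpE xy.1).1 k) (hcoef _ _ hk).le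
    nlinarith
  have hDzero : ∫ xy, (gE xy - c xy) ∂μ = 0 := by
    have hle : ∫ xy, (gE xy - c xy) ∂μ ≤ 0 := by
      rw [integral_sub hintE hintc]
      linarith
    exact le_antisymm hle (integral_nonneg hD0)
  have hDae : ∀ᵐ xy ∂μ, gE xy - c xy = 0 := by
    have h := (integral_eq_zero_iff_of_nonneg hD0 (hintE.sub hintc)).1 hDzero
    exact h.mono fun xy hxy => by simpa using hxy
  -- Conclusion
  filter_upwards [hDae, hstar1] with xy hD h1
  have hp := hpE xy.1
  have hsum0 : ∑ k ∈ univ \ {xy.2}, fstarEta xy.1 k * (1 - etaRow η xy.2 - η xy.2 k) = 0 := by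
    rw [hkey xy] at hD
    have h' : -A * ∑ k ∈ univ \ {xy.2}, fstarEta xy.1 k * (1 - etaRow η xy.2 - η xy.2 k) = 0 := by
      linarith
    rcases mul_eq_zero.1 h' with h'' | h''
    · exact absurd h'' hAne
    · exact h''
  have hzeros : ∀ k, k ≠ xy.2 → fstarEta xy.1 k = 0 := by
    intro k hk
    have hmem : k ∈ univ \ {xy.2} := by simp [hk]
    have ht := (Finset.sum_eq_zero_iff_of_nonneg fun j hj =>
      mul_nonneg (hp.1 j) (hcoef _ _ hj).le).1 hsum0 k hmem
    rcases mul_eq_zero.1 ht with h'' | h''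
    · exact h''
    · exact absurd h'' (ne_of_gt (hcoef _ _ hmem))
  have hone : fstarEta xy.1 xy.2 = 1 := by
    have hs := sum_diff_eq hp xy.2
    have : ∑ k ∈ univ \ {xy.2}, fstarEta xy.1 k = 0 :=
      Finset.sum_eq_zero fun k hk =>
        hzeros k fun h => (Finset.mem_sdiff.1 hk).2 (by simp [h])
    rw [this] at hs
    linarith
  refine ⟨⟨hone, hzeros⟩, ?_⟩
  funext k
  by_cases hk : k = xy.2
  · rw [hk, hone, h1]
  · rw [hzeros k hk, honehot _ (hpS xy.1) _ h1 k hk]
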